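/- arXiv:2403.15914 — 2 statements merged into one kernel-verified Lean document; each statement's English description precedes it below -/
import Mathlib

section
/- Let D be a division ring with derivation δ and τ an automorphism of D. The map H_{τ,0,1} : Σ b_i t^i ↦ Σ τ(b_i) t^i is a ring automorphism of D[t;δ] if and only if δ∘τ = τ∘δ. -/
/-- A differential (Ore) polynomial ring `D[t;δ]`: a ring containing `D` via the
ring embedding `ι`, with an element `t` satisfying `t·a = a·t + δ(a)`, and which is
freely spanned as a left `D`-module by the powers of `t` (via `rep`). -/
structure DiffPolyRing (D : Type*) [Ring D] (δ : D → D) where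
  carrier : Type*
  [ring : Ring carrier]
  ι : D →+* carrier
  t : carrier
  tcomm : ∀ a : D, t * ι a = ι a * t + ι (δ a)
  rep : carrier ≃+ (ℕ →₀ D)
  rep_symm_apply : ∀ c : ℕ →₀ D, rep.symm c = c.sum fun i a => ι a * t ^ i

attribute [instance] DiffPolyRing.ring

namespace DiffPolyRing

variable {D : Type*} [Ring D] {δ : D → D}

/-- The degree of a differential polynomial, with `deg 0 = ⊥`. -/
noncomputable def deg (P : DiffPolyRing D δ) (p : P.carrier) : WithBot ℕ :=
  (P.rep p).support.max

end DiffPolyRing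

/-
Since `H` fixes `t` and acts as `τ` on `D`, applying `H` to `t·a = a·t + δ(a)` shows
that multiplicativity forces `δ(τ a) = τ(δ a)`. Conversely, when `δ` and `τ` commute,
`H(t·y) = t·H(y)` and `H(a·y) = τ(a)·H(y)` hold on monomials `y = b tʲ`, hence everywhere
by additivity, and together they give `H(x·y) = H(x)·H(y)`.
-/

namespace DiffPolyRing

variable {D : Type*} [Ring D] {δ : D → D} (P : DiffPolyRing D δ)

theorem rep_symm_single (j : ℕ) (b : D) :
    P.rep.symm (Finsupp.single j b) = P.ι b * P.t ^ j := by
  rw [P.rep_symm_apply, Finsupp.sum_single_index (by simp)]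

theorem rep_ι_mul_t_pow (j : ℕ) (b : D) : P.rep (P.ι b * P.t ^ j) = Finsupp.single j b := by
  rw [← P.rep_symm_single, AddEquiv.apply_symm_apply]

theorem ι_injective : Function.Injective P.ι := fun a b h => by
  have := congrArg (fun x => P.rep (x * P.t ^ 0)) h
  exact Finsupp.single_injective 0 (by simpa only [rep_ι_mul_t_pow] using this)

@[elab_as_elim]
theorem induction_on {p : P.carrier → Prop} (x : P.carrier) (zero : p 0)
    (add : ∀ x y, p x → p y → p (x + y)) (monomial : ∀ j b, p (P.ι b * P.t ^ j)) : p x := by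
  rw [← P.rep.symm_apply_apply x]
  induction P.rep x using Finsupp.induction with
  | zero => simpa using zero
  | single_add j b f _ _ ih => rw [map_add, rep_symm_single]; exact add _ _ (monomial j b) ih

theorem t_mul_ι_mul_t_pow (b : D) (j : ℕ) :
    P.t * (P.ι b * P.t ^ j) = P.ι b * P.t ^ (j + 1) + P.ι (δ b) * P.t ^ j := by
  rw [← mul_assoc, P.tcomm, add_mul, mul_assoc, ← pow_succ']

/-- The map `H_{τ,0,1} : Σ bᵢ tⁱ ↦ Σ τ(bᵢ) tⁱ`. -/
noncomputable def mapCoeffs (τ : D ≃+* D) : P.carrier ≃+ P.carrier :=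
  (P.rep.trans (Finsupp.mapRange.addEquiv τ.toAddEquiv)).trans P.rep.symm

variable (τ : D ≃+* D)

theorem mapCoeffs_apply (x : P.carrier) :
    P.mapCoeffs τ x = (P.rep x).sum fun i b => P.ι (τ b) * P.t ^ i := by
  rw [mapCoeffs, AddEquiv.trans_apply, AddEquiv.trans_apply, P.rep_symm_apply,
    Finsupp.mapRange.addEquiv_apply, Finsupp.sum_mapRange_index (by simp)]
  rfl

theorem mapCoeffs_ι_mul_t_pow (j : ℕ) (b : D) :
    P.mapCoeffs τ (P.ι b * P.t ^ j) = P.ι (τ b) * P.t ^ j := by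
  simp [mapCoeffs, rep_ι_mul_t_pow, rep_symm_single]

theorem mapCoeffs_ι (a : D) : P.mapCoeffs τ (P.ι a) = P.ι (τ a) := by
  simpa using P.mapCoeffs_ι_mul_t_pow τ 0 a

theorem mapCoeffs_ι_mul_t (a : D) : P.mapCoeffs τ (P.ι a * P.t) = P.ι (τ a) * P.t := by
  simpa using P.mapCoeffs_ι_mul_t_pow τ 1 a

theorem mapCoeffs_t : P.mapCoeffs τ P.t = P.t := by
  simpa using P.mapCoeffs_ι_mul_t_pow τ 1 1

theorem mapCoeffs_one : P.mapCoeffs τ 1 = 1 := by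
  simpa using P.mapCoeffs_ι τ 1

theorem mapCoeffs_ι_mul (a : D) (y : P.carrier) :
    P.mapCoeffs τ (P.ι a * y) = P.ι (τ a) * P.mapCoeffs τ y := by
  induction y using P.induction_on with
  | zero => simp
  | add x y hx hy => rw [mul_add, map_add, hx, hy, map_add, mul_add]
  | monomial j b =>
    rw [← mul_assoc, ← map_mul, mapCoeffs_ι_mul_t_pow, mapCoeffs_ι_mul_t_pow, map_mul, map_mul,
      mul_assoc]

theorem commute_of_map_mul_t_mul_ι (a : D)
    (h : P.mapCoeffs τ (P.t * P.ι a) = P.mapCoeffs τ P.t * P.mapCoeffs τ (P.ι a)) :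
    δ (τ a) = τ (δ a) := by
  rw [P.tcomm, map_add, mapCoeffs_ι_mul_t, mapCoeffs_ι, mapCoeffs_t, mapCoeffs_ι, P.tcomm] at h
  exact (P.ι_injective (add_left_cancel h)).symm

section Commuting

variable {τ} (hτ : ∀ a, δ (τ a) = τ (δ a))
include hτ

theorem mapCoeffs_t_mul (y : P.carrier) : P.mapCoeffs τ (P.t * y) = P.t * P.mapCoeffs τ y := by
  induction y using P.induction_on with
  | zero => simp
  | add x y hx hy => rw [mul_add, map_add, hx, hy, map_add, mul_add]
  | monomial j b =>
    rw [t_mul_ι_mul_t_pow, map_add, mapCoeffs_ι_mul_t_pow, mapCoeffs_ι_mul_t_pow,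
      mapCoeffs_ι_mul_t_pow, t_mul_ι_mul_t_pow, hτ]

theorem mapCoeffs_t_pow_mul (i : ℕ) (y : P.carrier) :
    P.mapCoeffs τ (P.t ^ i * y) = P.t ^ i * P.mapCoeffs τ y := by
  induction i generalizing y with
  | zero => simp
  | succ i ih => rw [pow_succ, mul_assoc, ih, P.mapCoeffs_t_mul hτ, ← mul_assoc, ← pow_succ]

theorem mapCoeffs_mul (x y : P.carrier) :
    P.mapCoeffs τ (x * y) = P.mapCoeffs τ x * P.mapCoeffs τ y := by
  induction x using P.induction_on with
  | zero => simp
  | add x x' hx hx' => rw [add_mul, map_add, hx, hx', map_add, add_mul]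
  | monomial j b =>
    rw [mul_assoc, mapCoeffs_ι_mul, P.mapCoeffs_t_pow_mul hτ, mapCoeffs_ι_mul_t_pow, mul_assoc]

end Commuting

end DiffPolyRing

theorem H_tau_0_1_automorphism_iff_general
    (D : Type*) [DivisionRing D] (δ : D → D)
    (P : DiffPolyRing D δ) (τ : D ≃+* D)
    (H : P.carrier → P.carrier)
    (hH : ∀ x : P.carrier, H x = (P.rep x).sum fun i b => P.ι (τ b) * P.t ^ i) :
    ((∀ x y : P.carrier, H (x + y) = H x + H y) ∧
     (∀ x y : P.carrier, H (x * y) = H x * H y) ∧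
     H 1 = 1 ∧ Function.Bijective H) ↔
    (∀ a : D, δ (τ a) = τ (δ a)) := by
  obtain rfl : H = P.mapCoeffs τ := funext fun x => (hH x).trans (P.mapCoeffs_apply τ x).symm
  refine ⟨fun ⟨_, hmul, _, _⟩ a => P.commute_of_map_mul_t_mul_ι τ a (hmul _ _), fun hτ => ?_⟩
  exact ⟨map_add _, P.mapCoeffs_mul hτ, P.mapCoeffs_one τ, (P.mapCoeffs τ).bijective⟩

/-- `H_{τ,0,1} : Σ b_i t^i ↦ Σ τ(b_i) t^i` is a ring automorphism of
`D[t;δ]` iff `δ∘τ = τ∘δ`. -/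
theorem H_tau_0_1_automorphism_iff
    (D : Type*) [DivisionRing D] (δ : D → D)
    (hadd : ∀ a b : D, δ (a + b) = δ a + δ b)
    (hmul : ∀ a b : D, δ (a * b) = a * δ b + δ a * b)
    (P : DiffPolyRing D δ) (τ : D ≃+* D)
    (H : P.carrier → P.carrier)
    (hH : ∀ x : P.carrier, H x = (P.rep x).sum fun i b => P.ι (τ b) * P.t ^ i) :
    ((∀ x y : P.carrier, H (x + y) = H x + H y) ∧
     (∀ x y : P.carrier, H (x * y) = H x * H y) ∧
     H 1 = 1 ∧ Function.Bijective H) ↔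
    (∀ a : D, δ (τ a) = τ (δ a)) :=
  H_tau_0_1_automorphism_iff_general D δ P τ H hH
end

section
/- Let K be a field of characteristic p with derivation δ having minimum polynomial g(t) = t^p + a_1 t ∈ F[t] over F = Const(δ), with δ ≠ 0 on K, and let f(t) = g(t) − d ∈ K[t;δ] for any d ∈ K. Then the centralizer of K in the algebra (K,δ,d) = K[t;δ]/K[t;δ]f equals K; that is, if an element Σ_{i=0}^{p−1} b_i t^i commutes with every c ∈ K, then b_i = 0 for all i ≥ 1. -/
namespace DiffPolyRing

variable {D : Type*} [Ring D] {δ : D → D} (P : DiffPolyRing D δ)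

lemma rep_smul_tpow (a : D) (i : ℕ) : P.rep (P.ι a * P.t ^ i) = Finsupp.single i a := by
  have h : P.rep.symm (Finsupp.single i a) = P.ι a * P.t ^ i := by
    rw [P.rep_symm_apply, Finsupp.sum_single_index]
    simp
  rw [← h, AddEquiv.apply_symm_apply]

lemma self_eq_sum (x : P.carrier) :
    x = ∑ i ∈ (P.rep x).support, P.ι (P.rep x i) * P.t ^ i := by
  conv_lhs => rw [← P.rep.symm_apply_apply x, P.rep_symm_apply]
  rfl

variable (hadd : ∀ a b : D, δ (a + b) = δ a + δ b)
include hadd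

lemma dzero : δ 0 = 0 := by
  have := hadd 0 0
  rw [add_zero] at this
  exact right_eq_add.mp this

lemma dnat (n : ℕ) (u : D) : δ ((n : D) * u) = (n : D) * δ u := by
  induction n with
  | zero => simp [dzero hadd]
  | succ n ih =>
    push_cast
    rw [add_mul, one_mul, hadd, ih, add_mul, one_mul]

lemma tpow_mul_ι (c : D) (i : ℕ) :
    P.t ^ i * P.ι c =
      ∑ j ∈ Finset.range (i+1), P.ι ((i.choose j : D) * δ^[i-j] c) * P.t ^ j := by
  induction i with
  | zero => simp
  | succ i ih =>
    have h1 : P.t ^ (i+1) * P.ι c = P.t * (P.t ^ i * P.ι c) := by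
      rw [← mul_assoc, ← pow_succ']
    rw [h1, ih, Finset.mul_sum]
    have h2 : ∀ j ∈ Finset.range (i+1),
        P.t * (P.ι ((i.choose j : D) * δ^[i-j] c) * P.t ^ j)
        = P.ι ((i.choose j : D) * δ^[i+1-(j+1)] c) * P.t ^ (j+1)
          + P.ι ((i.choose j : D) * δ^[i+1-j] c) * P.t ^ j := by
      intro j hj
      rw [Finset.mem_range] at hj
      have e1 : i + 1 - (j+1) = i - j := by omega
      have e2 : i + 1 - j = (i - j) + 1 := by omega
      rw [e1, e2, ← mul_assoc, P.tcomm, Function.iterate_succ_apply', add_mul, mul_assoc,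
        ← pow_succ', dnat hadd]
    rw [Finset.sum_congr rfl h2, Finset.sum_add_distrib]
    set g : ℕ → P.carrier := fun j => P.ι ((δ : D → D)^[i+1-j] c) * P.t ^ j with hg
    have key : ∀ (m : ℕ) (j : ℕ), P.ι ((m : D) * δ^[i+1-j] c) * P.t ^ j = m • g j := by
      intro m j
      rw [hg]
      simp [nsmul_eq_mul, mul_assoc, map_natCast]
    calc (∑ j ∈ Finset.range (i+1), P.ι ((i.choose j : D) * δ^[i+1-(j+1)] c) * P.t ^ (j+1))
          + ∑ j ∈ Finset.range (i+1), P.ι ((i.choose j : D) * δ^[i+1-j] c) * P.t ^ j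
        = (∑ j ∈ Finset.range (i+1), (i.choose j) • g (j+1))
          + ∑ j ∈ Finset.range (i+1), (i.choose j) • g j := by
          rw [Finset.sum_congr rfl (fun j _ => key _ _), Finset.sum_congr rfl (fun j _ => key _ _)]
      _ = ∑ j ∈ Finset.range (i+2), ((i+1).choose j) • g j := by
          rw [Finset.sum_range_succ' (fun j => ((i+1).choose j) • g j) (i+1)]
          rw [Finset.sum_range_succ' (fun j => (i.choose j) • g j) i]
          simp only [Nat.choose_succ_succ, add_smul, Nat.choose_zero_right, one_smul,
            Finset.sum_add_distrib]
          rw [Finset.sum_range_succ (fun k => (i.choose (k+1)) • g (k+1)) i]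
          simp only [Nat.choose_succ_self, zero_smul, add_zero]
          abel
      _ = ∑ j ∈ Finset.range (i+2), P.ι (((i+1).choose j : D) * δ^[i+1-j] c) * P.t ^ j := by
          exact (Finset.sum_congr rfl (fun j _ => (key _ _))).symm

lemma rep_mul_ι_apply (x : P.carrier) (c : D) (j : ℕ) :
    P.rep (x * P.ι c) j =
      ∑ i ∈ (P.rep x).support,
        if j ≤ i then P.rep x i * ((i.choose j : D) * δ^[i-j] c) else 0 := by
  conv_lhs => rw [self_eq_sum P x]
  rw [Finset.sum_mul]
  have h : ∀ i ∈ (P.rep x).support,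
      P.ι (P.rep x i) * P.t ^ i * P.ι c
      = ∑ k ∈ Finset.range (i+1),
          P.ι (P.rep x i * ((i.choose k : D) * δ^[i-k] c)) * P.t ^ k := by
    intro i _
    rw [mul_assoc, tpow_mul_ι P hadd, Finset.mul_sum]
    exact Finset.sum_congr rfl fun k _ => by rw [← mul_assoc, ← map_mul]
  rw [Finset.sum_congr rfl h, map_sum, Finsupp.finset_sum_apply]
  refine Finset.sum_congr rfl fun i _ => ?_
  rw [map_sum, Finsupp.finset_sum_apply]
  have h2 : ∀ k ∈ Finset.range (i+1),
      (P.rep (P.ι (P.rep x i * ((i.choose k : D) * δ^[i-k] c)) * P.t ^ k)) j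
      = if k = j then P.rep x i * ((i.choose k : D) * δ^[i-k] c) else 0 := by
    intro k _
    rw [rep_smul_tpow, Finsupp.single_apply]
  rw [Finset.sum_congr rfl h2, Finset.sum_ite_eq' (Finset.range (i+1)) j]
  simp [Nat.lt_succ_iff]

lemma rep_ι_mul_apply (x : P.carrier) (c : D) (j : ℕ) :
    P.rep (P.ι c * x) j = c * P.rep x j := by
  conv_lhs => rw [self_eq_sum P x]
  rw [Finset.mul_sum]
  have h : ∀ i ∈ (P.rep x).support,
      P.ι c * (P.ι (P.rep x i) * P.t ^ i) = P.ι (c * P.rep x i) * P.t ^ i := by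
    intro i _; rw [← mul_assoc, ← map_mul]
  rw [Finset.sum_congr rfl h, map_sum, Finsupp.finset_sum_apply]
  have h2 : ∀ i ∈ (P.rep x).support,
      (P.rep (P.ι (c * P.rep x i) * P.t ^ i)) j
      = if i = j then c * P.rep x i else 0 := by
    intro i _
    rw [rep_smul_tpow, Finsupp.single_apply]
  rw [Finset.sum_congr rfl h2, Finset.sum_ite_eq' (P.rep x).support j]
  by_cases hj : j ∈ (P.rep x).support
  · simp [hj]
  · rw [Finsupp.notMem_support_iff.mp hj]
    simp [hj]

end DiffPolyRing

/-- for `g(t) = t^p + a_1 t` the minimum polynomial of `δ ≠ 0` and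
`f = g(t) - d`, the centralizer of `K` in `(K,δ,d) = K[t;δ]/K[t;δ]f` is `K`:
any `Σ b_i t^i` of degree `< p` commuting with all of `K` has `b_i = 0` for `i ≥ 1`. -/
theorem centralizer_of_K_eq_K
    (K : Type*) [Field K] (p : ℕ) (hp : p.Prime) [CharP K p] (δ : K → K)
    (hadd : ∀ a b : K, δ (a + b) = δ a + δ b)
    (hmul : ∀ a b : K, δ (a * b) = a * δ b + δ a * b)
    (hδ : δ ≠ 0)
    (a1 : K) (ha1 : δ a1 = 0)
    (hmin : ∀ x : K, δ^[p] x + a1 * δ x = 0)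
    (d : K) (P : DiffPolyRing K δ)
    (f : P.carrier) (hf : f = P.t ^ p + P.ι a1 * P.t - P.ι d)
    (modf : P.carrier → P.carrier)
    (hmod : ∀ g : P.carrier, P.deg (modf g) < P.deg f ∧ ∃ q, g = q * f + modf g)
    (x : P.carrier) (hx : P.deg x < P.deg f)
    (hcomm : ∀ c : K, modf (x * P.ι c) = modf (P.ι c * x)) :
    ∀ i : ℕ, 1 ≤ i → P.rep x i = 0 := by
  classical
  have hp2 : 2 ≤ p := hp.two_le
  -- rep of f
  have repf : P.rep f = Finsupp.single p 1 + Finsupp.single 1 a1 - Finsupp.single 0 d := by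
    have h0 : f = P.ι 1 * P.t ^ p + P.ι a1 * P.t ^ 1 - P.ι d * P.t ^ 0 := by
      rw [hf]; simp
    rw [h0, map_sub, map_add, DiffPolyRing.rep_smul_tpow, DiffPolyRing.rep_smul_tpow, DiffPolyRing.rep_smul_tpow]
  have degf_le : P.deg f ≤ (p : WithBot ℕ) := by
    refine Finset.max_le fun i hi => ?_
    by_contra hlt
    push_neg at hlt
    rw [Nat.cast_withBot] at hlt
    have hpi : p < i := WithBot.coe_lt_coe.mp hlt
    refine (Finsupp.mem_support_iff.mp hi) ?_
    rw [repf]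
    simp only [Finsupp.sub_apply, Finsupp.add_apply, Finsupp.single_apply]
    rw [if_neg (by omega), if_neg (by omega), if_neg (by omega)]
    simp
  have hblt : ∀ j, p ≤ j → P.rep x j = 0 := by
    intro j hj
    by_contra hbj
    have hjmem : j ∈ (P.rep x).support := Finsupp.mem_support_iff.mpr hbj
    have h1 : (j : WithBot ℕ) ≤ P.deg x := Finset.le_max hjmem
    have h2 : (j : WithBot ℕ) < (p : WithBot ℕ) := lt_of_le_of_lt h1 (lt_of_lt_of_le hx degf_le)
    rw [Nat.cast_withBot, Nat.cast_withBot] at h2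
    have : j < p := WithBot.coe_lt_coe.mp h2
    omega
  have hxlt : ∀ i ∈ (P.rep x).support, i < p := by
    intro i hi
    by_contra h
    exact (Finsupp.mem_support_iff.mp hi) (hblt i (by omega))
  -- t commutes with a1
  have hca1 : ∀ i : ℕ, P.t ^ i * P.ι a1 = P.ι a1 * P.t ^ i := by
    have h : Commute P.t (P.ι a1) := by
      show P.t * P.ι a1 = P.ι a1 * P.t
      rw [P.tcomm, ha1, map_zero, add_zero]
    exact fun i => (h.pow_left i)
  -- x commutes with every ι c in the ring itself
  have hxc : ∀ c : K, x * P.ι c = P.ι c * x := by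
    intro c
    obtain ⟨-, q1, hq1⟩ := hmod (x * P.ι c)
    obtain ⟨-, q2, hq2⟩ := hmod (P.ι c * x)
    have heq : x * P.ι c - P.ι c * x = (q1 - q2) * f := by
      rw [hq1, hq2, hcomm c, sub_mul]; abel
    rcases eq_or_ne (q1 - q2) 0 with hy | hy
    · rw [hy, zero_mul] at heq
      exact sub_eq_zero.mp heq
    exfalso
    set y := q1 - q2 with hydef
    have hS : (P.rep y).support.Nonempty := by
      rw [Finsupp.support_nonempty_iff]
      intro h0
      exact hy (P.rep.injective (by rw [h0, map_zero]))
    set n := (P.rep y).support.max' hS with hn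
    -- expand y * f
    have hyf : y * f = ∑ i ∈ (P.rep y).support,
        (P.ι (P.rep y i) * P.t ^ (i + p)
         + P.ι (P.rep y i * a1) * P.t ^ (i+1)
         - ∑ k ∈ Finset.range (i+1),
             P.ι (P.rep y i * ((i.choose k : K) * δ^[i-k] d)) * P.t ^ k) := by
      conv_lhs => rw [DiffPolyRing.self_eq_sum P y]
      rw [Finset.sum_mul]
      refine Finset.sum_congr rfl fun i _ => ?_
      rw [hf, mul_sub, mul_add]
      congr 1
      · congr 1
        · rw [mul_assoc, ← pow_add]
        · simp only [map_mul, pow_succ, mul_assoc]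
          rw [← mul_assoc (P.t ^ i) (P.ι a1), hca1 i, mul_assoc]
      · rw [mul_assoc, DiffPolyRing.tpow_mul_ι P hadd, Finset.mul_sum]
        exact Finset.sum_congr rfl fun k _ => by rw [← mul_assoc, ← map_mul]
    have hcoef : P.rep (y * f) (p + n) = P.rep y n := by
      rw [hyf, map_sum, Finsupp.finset_sum_apply]
      have h3 : ∀ i ∈ (P.rep y).support,
          (P.rep (P.ι (P.rep y i) * P.t ^ (i + p)
            + P.ι (P.rep y i * a1) * P.t ^ (i+1)
            - ∑ k ∈ Finset.range (i+1),
                P.ι (P.rep y i * ((i.choose k : K) * δ^[i-k] d)) * P.t ^ k)) (p + n)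
          = if i = n then P.rep y i else 0 := by
        intro i hi
        have hin : i ≤ n := Finset.le_max' _ _ hi
        rw [show P.rep (P.ι (P.rep y i) * P.t ^ (i + p)
            + P.ι (P.rep y i * a1) * P.t ^ (i+1)
            - ∑ k ∈ Finset.range (i+1),
                P.ι (P.rep y i * ((i.choose k : K) * δ^[i-k] d)) * P.t ^ k)
          = P.rep (P.ι (P.rep y i) * P.t ^ (i + p)) + P.rep (P.ι (P.rep y i * a1) * P.t ^ (i+1))
            - P.rep (∑ k ∈ Finset.range (i+1),
                P.ι (P.rep y i * ((i.choose k : K) * δ^[i-k] d)) * P.t ^ k) by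
            rw [map_sub, map_add]]
        rw [DiffPolyRing.rep_smul_tpow, DiffPolyRing.rep_smul_tpow, Finsupp.sub_apply,
          Finsupp.add_apply, Finsupp.single_apply, Finsupp.single_apply]
        have z3 : (P.rep (∑ k ∈ Finset.range (i+1),
            P.ι (P.rep y i * ((i.choose k : K) * δ^[i-k] d)) * P.t ^ k)) (p + n) = 0 := by
          rw [map_sum, Finsupp.finset_sum_apply]
          refine Finset.sum_eq_zero fun k hk => ?_
          rw [Finset.mem_range] at hk
          rw [DiffPolyRing.rep_smul_tpow, Finsupp.single_apply, if_neg (by omega)]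
        rw [z3, sub_zero, if_neg (show ¬ i + 1 = p + n by omega), add_zero]
        by_cases hieq : i = n
        · rw [if_pos (by omega), if_pos hieq]
        · rw [if_neg (by omega), if_neg hieq]
      rw [Finset.sum_congr rfl h3, Finset.sum_ite_eq' (P.rep y).support n]
      rw [if_pos (Finset.max'_mem _ hS)]
    have hzero : P.rep (y * f) (p + n) = 0 := by
      rw [← heq, map_sub, Finsupp.sub_apply, DiffPolyRing.rep_mul_ι_apply P hadd, DiffPolyRing.rep_ι_mul_apply P hadd,
        hblt (p+n) (by omega), mul_zero, sub_zero]
      refine Finset.sum_eq_zero fun i hi => ?_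
      rw [if_neg (by have := hxlt i hi; omega)]
    rw [hcoef] at hzero
    exact (Finsupp.mem_support_iff.mp (Finset.max'_mem _ hS)) hzero
  -- coefficientwise relation
  have rel : ∀ (c : K) (j : ℕ),
      (∑ i ∈ (P.rep x).support,
        if j ≤ i then P.rep x i * ((i.choose j : K) * δ^[i-j] c) else 0) = c * P.rep x j := by
    intro c j
    rw [← DiffPolyRing.rep_mul_ι_apply P hadd, ← DiffPolyRing.rep_ι_mul_apply P hadd, hxc c]
  obtain ⟨c0, hc0⟩ : ∃ c0, δ c0 ≠ 0 := by
    by_contra h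
    push_neg at h
    exact hδ (funext fun u => h u)
  have main : ∀ m : ℕ, ∀ i : ℕ, p ≤ i + m → 1 ≤ i → P.rep x i = 0 := by
    intro m
    induction m with
    | zero => exact fun i hi _ => hblt i (by omega)
    | succ m ih =>
      intro i hi h1
      by_cases hip : p ≤ i + m
      · exact ih i hip h1
      have hiplt : i < p := by omega
      have hk : ∀ k, i < k → P.rep x k = 0 := by
        intro k hk'
        rcases le_or_gt p k with h | h
        · exact hblt k h
        · exact ih k (by omega) (by omega)
      have R := rel c0 (i-1)
      set F : ℕ → K := fun k => P.rep x k * ((k.choose (i-1) : K) * δ^[k-(i-1)] c0) with hF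
      have hR1 : (∑ k ∈ (P.rep x).support, if i-1 ≤ k then F k else 0)
          = ∑ k ∈ (P.rep x).support.filter (fun k => i-1 ≤ k), F k := by
        rw [Finset.sum_filter]
      have hsub : (P.rep x).support.filter (fun k => i-1 ≤ k) ⊆ {i-1, i} := by
        intro k hkmem
        rw [Finset.mem_filter] at hkmem
        obtain ⟨hk1, hk2⟩ := hkmem
        have hkne : P.rep x k ≠ 0 := Finsupp.mem_support_iff.mp hk1
        have : ¬ i < k := fun hlt => hkne (hk k hlt)
        have : k = i - 1 ∨ k = i := by omega
        rcases this with h | h <;> simp [h]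
      have hR2 : (∑ k ∈ (P.rep x).support.filter (fun k => i-1 ≤ k), F k)
          = ∑ k ∈ ({i-1, i} : Finset ℕ), F k := by
        refine Finset.sum_subset hsub fun k hk1 hk2 => ?_
        have : k ∉ (P.rep x).support := by
          intro hmem
          apply hk2
          rw [Finset.mem_filter]
          refine ⟨hmem, ?_⟩
          simp only [Finset.mem_insert, Finset.mem_singleton] at hk1
          omega
        rw [hF]
        simp [Finsupp.notMem_support_iff.mp this]
      have hpair : (∑ k ∈ ({i-1, i} : Finset ℕ), F k) = F (i-1) + F i :=
        Finset.sum_pair (by omega)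
      rw [hR1, hR2, hpair] at R
      have hFi1 : F (i-1) = P.rep x (i-1) * c0 := by
        rw [hF]; simp
      have hFi : F i = P.rep x i * ((i : K) * δ c0) := by
        rw [hF]
        have h1' : i - (i-1) = 1 := by omega
        have h2' : i.choose (i-1) = i := by
          rw [Nat.choose_symm (by omega : 1 ≤ i), Nat.choose_one_right]
        simp only [hF, h1', h2', Function.iterate_one]
      rw [hFi1, hFi] at R
      have hcancel : P.rep x i * ((i : K) * δ c0) = 0 := by
        have : P.rep x (i-1) * c0 = c0 * P.rep x (i-1) := mul_comm _ _
        linear_combination R - this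
      rcases mul_eq_zero.mp hcancel with h | h
      · exact h
      · exfalso
        rcases mul_eq_zero.mp h with h' | h'
        · have : (p : ℕ) ∣ i := (CharP.cast_eq_zero_iff K p i).mp h'
          have := Nat.le_of_dvd (by omega) this
          omega
        · exact hc0 h'
  intro i hi
  exact main p i (by omega) hi
end
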